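/- arXiv:2403.01042 — 4 statements merged into one kernel-verified Lean document; each statement's English description precedes it below -/
import Mathlib

section
/- Synthetic Players QTM welfare guarantee (known external welfare): consider the two-alternative QTM played by the n real agents together with n̂ synthetic agents, where the estimates equal the true impacts (B̂_k = B_k for k = 1, 2), max_{i,k} v_k^i > 0, c = (1/2)·max_{i,k} v_k^i, and n̂ ≥ (max_k B_k)/(2c) so that each synthetic agent's values are at most 2c. Let T = W_1 / max_{i,k} v_k^i and assume W_1 > 0. Then in any pure-strategy Nash equilibrium of this (n + n̂)-player QTM, the expected total welfare satisfies p_1 W_1 + p_2 W_2 ≥ W_1 · max{ 1/2, 1 − (2/T)^{2/5} }. -/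
open Real Finset

/-- Softmax selection probabilities of the QTM given aggregate vote totals `A`. -/
noncomputable def softmax {m : ℕ} (A : Fin m → ℝ) (k : Fin m) : ℝ :=
  Real.exp (A k) / ∑ l, Real.exp (A l)

/-- Expected utility of agent `i` in the QTM with parameter `c`, values `v`, and
vote profile `a`. -/
noncomputable def qtmUtil {n m : ℕ} (c : ℝ) (v : Fin n → Fin m → ℝ)
    (a : Fin n → Fin m → ℝ) (i : Fin n) : ℝ :=
  (∑ k, softmax (fun k => ∑ j, a j k) k * v i k)
    - c * ∑ k, (a i k) ^ 2
    + (c / ((n : ℝ) - 1)) * ∑ j ∈ Finset.univ.erase i, ∑ k, (a j k) ^ 2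

/-- Pure-strategy Nash equilibrium of the QTM. -/
def IsNashQTM {n m : ℕ} (c : ℝ) (v : Fin n → Fin m → ℝ)
    (a : Fin n → Fin m → ℝ) : Prop :=
  ∀ (i : Fin n) (b : Fin m → ℝ),
    qtmUtil c v (Function.update a i b) i ≤ qtmUtil c v a i

lemma exp_sq_le (x : ℝ) (hx : 0 ≤ x) : x^2/2 ≤ Real.exp x := by
  have hb : (0:ℝ) ≤ 1 + x/3 := by linarith
  have h : 1 + x/3 ≤ Real.exp (x/3) := by
    have := Real.add_one_le_exp (x/3); linarith
  have h2 : (1+x/3)^3 ≤ Real.exp (x/3)^3 := pow_le_pow_left₀ hb h 3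
  have h4 : Real.exp x = Real.exp (x/3)^3 := by
    rw [← Real.exp_nat_mul]
    norm_num
    ring_nf
  rw [h4]
  nlinarith [mul_nonneg hx (sq_nonneg (x-3))]

lemma foc_aux (c A0 A1 w0 w1 x0 x1 C : ℝ) (hc : 0 < c)
    (hmax : ∀ t : ℝ,
      (Real.exp (A0 + t) * w0 + Real.exp (A1 - t) * w1) /
          (Real.exp (A0 + t) + Real.exp (A1 - t))
        - c * ((x0 + t) ^ 2 + (x1 - t) ^ 2) + C
      ≤ (Real.exp A0 * w0 + Real.exp A1 * w1) / (Real.exp A0 + Real.exp A1)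
        - c * (x0 ^ 2 + x1 ^ 2) + C) :
    c * (x0 - x1) =
      Real.exp A0 * Real.exp A1 / (Real.exp A0 + Real.exp A1) ^ 2 * (w0 - w1) := by
  have hE0 : 0 < Real.exp A0 := Real.exp_pos _
  have hE1 : 0 < Real.exp A1 := Real.exp_pos _
  set F : ℝ → ℝ := fun t =>
    (Real.exp (A0 + t) * w0 + Real.exp (A1 - t) * w1) /
        (Real.exp (A0 + t) + Real.exp (A1 - t))
      - c * ((x0 + t) ^ 2 + (x1 - t) ^ 2) + C with hF
  have hF0 : F 0 = (Real.exp A0 * w0 + Real.exp A1 * w1) / (Real.exp A0 + Real.exp A1)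
      - c * (x0 ^ 2 + x1 ^ 2) + C := by
    simp [hF]
  have hmax0 : IsLocalMax F 0 := by
    apply Filter.Eventually.of_forall
    intro t
    rw [hF0]
    exact hmax t
  have hd0 : HasDerivAt (fun t : ℝ => Real.exp (A0 + t)) (Real.exp A0) 0 := by
    simpa using ((hasDerivAt_id (0:ℝ)).const_add A0).exp
  have hd1 : HasDerivAt (fun t : ℝ => Real.exp (A1 - t)) (-Real.exp A1) 0 := by
    simpa using ((hasDerivAt_id (0:ℝ)).const_sub A1).exp
  have hnum : HasDerivAt (fun t : ℝ => Real.exp (A0 + t) * w0 + Real.exp (A1 - t) * w1)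
      (Real.exp A0 * w0 + (-Real.exp A1) * w1) 0 :=
    (hd0.mul_const w0).add (hd1.mul_const w1)
  have hden : HasDerivAt (fun t : ℝ => Real.exp (A0 + t) + Real.exp (A1 - t))
      (Real.exp A0 + (-Real.exp A1)) 0 := hd0.add hd1
  have hdenne : (fun t : ℝ => Real.exp (A0 + t) + Real.exp (A1 - t)) 0 ≠ 0 := by
    simp only [add_zero, sub_zero]
    positivity
  have hdiv := hnum.div hden hdenne
  have hq0 : HasDerivAt (fun t : ℝ => (x0 + t)^2) (2*x0) 0 := by
    simpa using ((hasDerivAt_id (0:ℝ)).const_add x0).fun_pow 2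
  have hq1 : HasDerivAt (fun t : ℝ => (x1 - t)^2) (-(2*x1)) 0 := by
    simpa using ((hasDerivAt_id (0:ℝ)).const_sub x1).fun_pow 2
  have hquad := (hq0.add hq1).const_mul c
  have hder := (hdiv.sub hquad).add_const C
  have hzero := hmax0.hasDerivAt_eq_zero hder
  simp only [add_zero, sub_zero] at hzero
  have hd2 : (0:ℝ) < (Real.exp A0 + Real.exp A1)^2 := by positivity
  field_simp at hzero ⊢
  nlinarith [hzero, hd2]

lemma sum_update {N : ℕ} (a : Fin N → Fin 2 → ℝ) (i : Fin N) (b : Fin 2 → ℝ) (k : Fin 2) :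
    ∑ j, Function.update a i b j k = (∑ j, a j k) + (b k - a i k) := by
  have h : (fun j => Function.update a i b j k) = Function.update (fun j => a j k) i (b k) := by
    funext j
    rcases eq_or_ne j i with h | h
    · subst h; simp
    · simp [Function.update_of_ne h]
  calc ∑ j, Function.update a i b j k
      = ∑ j, Function.update (fun j => a j k) i (b k) j := by rw [← h]
    _ = b k + ∑ j ∈ Finset.univ \ {i}, a j k := Finset.sum_update_of_mem (Finset.mem_univ i) _ _
    _ = b k + ∑ j ∈ Finset.univ.erase i, a j k := by rw [← Finset.erase_eq]
    _ = b k + ((∑ j, a j k) - a i k) := by rw [Finset.sum_erase_eq_sub (Finset.mem_univ i)]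
    _ = (∑ j, a j k) + (b k - a i k) := by ring

lemma qtm_expand {N : ℕ} (c : ℝ) (w a' : Fin N → Fin 2 → ℝ) (i : Fin N) :
    qtmUtil c w a' i =
      (Real.exp (∑ j, a' j 0) * w i 0 + Real.exp (∑ j, a' j 1) * w i 1) /
        (Real.exp (∑ j, a' j 0) + Real.exp (∑ j, a' j 1))
      - c * ((a' i 0)^2 + (a' i 1)^2)
      + (c / ((N:ℝ) - 1)) * ∑ j ∈ Finset.univ.erase i, ((a' j 0)^2 + (a' j 1)^2) := by
  simp only [qtmUtil, softmax, Fin.sum_univ_two]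
  ring

lemma final_arith (W0 W1 x T p q : ℝ)
    (hx : 0 < x) (hW0 : 0 < W0) (hW1 : 0 ≤ W1) (hWord : W1 ≤ W0)
    (hT : T = W0 / x)
    (hp : 1/2 ≤ p) (hpq : p + q = 1) (hq0 : 0 < q)
    (hqe : q ≤ Real.exp (-(q * (W0 - W1) / x))) :
    W0 * max (1/2) (1 - (2/T) ^ ((2:ℝ)/5)) ≤ p * W0 + q * W1 := by
  have hT0 : 0 < T := by rw [hT]; positivity
  set ε := (2/T) ^ ((2:ℝ)/5) with hε
  have hε0 : 0 < ε := Real.rpow_pos_of_pos (by positivity) _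
  rcases le_total (1 - ε) (1/2) with hcase | hcase
  · rw [max_eq_left hcase]
    nlinarith [mul_nonneg hq0.le hW1]
  · rw [max_eq_right hcase]
    have hεhalf : ε ≤ 1/2 := by linarith
    have hr : (0:ℝ) < 2/T := by positivity
    have hr1 : 2/T < 1 := by
      by_contra hcon
      push_neg at hcon
      have : (1:ℝ) ≤ ε := Real.one_le_rpow hcon (by norm_num)
      linarith
    set s := q * (W0 - W1) / x with hs
    have hs0 : 0 ≤ s := by
      apply div_nonneg _ hx.le
      exact mul_nonneg hq0.le (by linarith)
    have hsT : s ≤ Real.exp (-s) * T := by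
      have hΔ : 0 ≤ (W0 - W1)/x := by
        apply div_nonneg _ hx.le; linarith
      have h1 : s ≤ Real.exp (-s) * ((W0 - W1)/x) := by
        calc s = q * ((W0-W1)/x) := by rw [hs]; ring
          _ ≤ Real.exp (-s) * ((W0-W1)/x) := mul_le_mul_of_nonneg_right hqe hΔ
      have h2 : (W0 - W1)/x ≤ T := by
        rw [hT]
        gcongr
        linarith
      calc s ≤ Real.exp (-s) * ((W0-W1)/x) := h1
        _ ≤ Real.exp (-s) * T := mul_le_mul_of_nonneg_left h2 (Real.exp_pos _).le
    set S := ε * T with hS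
    have hS0 : 0 < S := mul_pos hε0 hT0
    have hr5 : (2/T) ≤ (2/T) ^ ((1:ℝ)/5) := by
      have := Real.rpow_le_rpow_of_exponent_ge hr hr1.le (show (1:ℝ)/5 ≤ 1 by norm_num)
      rwa [Real.rpow_one] at this
    have hε3 : ε^3 = (2/T) * (2/T)^((1:ℝ)/5) := by
      rw [hε, ← Real.rpow_natCast ((2/T)^((2:ℝ)/5)) 3, ← Real.rpow_mul hr.le]
      rw [show ((2:ℝ)/5 * (3:ℕ) : ℝ) = 1 + 1/5 by push_cast; norm_num]
      rw [Real.rpow_add hr, Real.rpow_one]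
    have h15 : 1 ≤ T * (2/T)^((1:ℝ)/5) := by
      have h := mul_le_mul_of_nonneg_left hr5 hT0.le
      have hTr : T * (2/T) = 2 := by field_simp
      linarith
    have hScube : 2*T ≤ S^3 := by
      have hcube : S^3 = ε^3 * T^3 := by rw [hS]; ring
      rw [hcube, hε3]
      have expand : (2/T) * (2/T)^((1:ℝ)/5) * T^3 = 2*T*(T * (2/T)^((1:ℝ)/5)) := by
        field_simp
      rw [expand]
      nlinarith
    have hsS : s ≤ S := by
      by_contra hcon
      push_neg at hcon
      have h1 : Real.exp (-s) ≤ Real.exp (-S) := Real.exp_le_exp.2 (by linarith)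
      have h2 : Real.exp (-S) * T ≤ S := by
        rw [Real.exp_neg, inv_mul_le_iff₀ (Real.exp_pos S)]
        nlinarith [exp_sq_le S hS0.le, Real.exp_pos S]
      nlinarith [Real.exp_pos (-s)]
    have hsx : q * (W0 - W1) = s * x := by rw [hs]; field_simp
    have hST : S * x = ε * W0 := by
      rw [hS, hT]; field_simp
    nlinarith [mul_le_mul_of_nonneg_right hsS hx.le]

theorem stmt14 (n nh : ℕ) (hn : 2 ≤ n) (hnh : 1 ≤ nh)
    (v : Fin n → Fin 2 → ℝ) (hv : ∀ i k, 0 ≤ v i k)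
    (B : Fin 2 → ℝ) (hB : ∀ k, 0 ≤ B k)
    (x : ℝ) (hx : x = ⨆ i, ⨆ k, v i k) (hxpos : 0 < x)
    (c : ℝ) (hc : c = (1 / 2) * x)
    (hnhB : (⨆ k, B k) / (2 * c) ≤ (nh : ℝ))
    (W : Fin 2 → ℝ) (hW : ∀ k, W k = (∑ i, v i k) + B k)
    (hWord : W 1 ≤ W 0) (hWpos : 0 < W 0)
    (T : ℝ) (hT : T = W 0 / x)
    (w : Fin (n + nh) → Fin 2 → ℝ)
    (hw : w = fun i => Fin.addCases v (fun _ k => B k / (nh : ℝ)) i)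
    (a : Fin (n + nh) → Fin 2 → ℝ) (ha : IsNashQTM c w a) :
    W 0 * max (1 / 2) (1 - (2 / T) ^ ((2 : ℝ) / 5))
      ≤ softmax (fun k => ∑ j, a j k) 0 * W 0
        + softmax (fun k => ∑ j, a j k) 1 * W 1 := by
  have hc0 : 0 < c := by rw [hc]; positivity
  have hnh0 : ((nh:ℝ)) ≠ 0 := by
    have : (0:ℝ) < (nh:ℝ) := by exact_mod_cast Nat.pos_of_ne_zero (by omega)
    linarith
  have hE0p : 0 < Real.exp (∑ j, a j 0) := Real.exp_pos _
  have hE1p : 0 < Real.exp (∑ j, a j 1) := Real.exp_pos _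
  have hdenp : 0 < Real.exp (∑ j, a j 0) + Real.exp (∑ j, a j 1) := by linarith
  -- first-order condition for each agent
  have hfoc : ∀ i : Fin (n+nh), c * (a i 0 - a i 1) =
      Real.exp (∑ j, a j 0) * Real.exp (∑ j, a j 1) /
        (Real.exp (∑ j, a j 0) + Real.exp (∑ j, a j 1))^2 * (w i 0 - w i 1) := by
    intro i
    apply foc_aux c (∑ j, a j 0) (∑ j, a j 1) (w i 0) (w i 1) (a i 0) (a i 1)
      ((c / (((n+nh:ℕ):ℝ) - 1)) * ∑ j ∈ Finset.univ.erase i, ((a j 0)^2 + (a j 1)^2)) hc0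
    intro t
    set bt : Fin 2 → ℝ := fun k => if k = 0 then a i 0 + t else a i 1 - t with hbt
    have h := ha i bt
    rw [qtm_expand, qtm_expand] at h
    have hb0 : bt 0 = a i 0 + t := by simp [hbt]
    have hb1 : bt 1 = a i 1 - t := by simp [hbt]
    have e0 : ∑ j, Function.update a i bt j 0 = (∑ j, a j 0) + t := by
      rw [sum_update, hb0]; ring
    have e1 : ∑ j, Function.update a i bt j 1 = (∑ j, a j 1) - t := by
      rw [sum_update, hb1]; ring
    have e2 : Function.update a i bt i 0 = a i 0 + t := by rw [Function.update_self, hb0]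
    have e3 : Function.update a i bt i 1 = a i 1 - t := by rw [Function.update_self, hb1]
    have e4 : ∑ j ∈ Finset.univ.erase i,
          ((Function.update a i bt j 0)^2 + (Function.update a i bt j 1)^2)
        = ∑ j ∈ Finset.univ.erase i, ((a j 0)^2 + (a j 1)^2) := by
      apply Finset.sum_congr rfl
      intro j hj
      rw [Function.update_of_ne (Finset.ne_of_mem_erase hj)]
    rw [e0, e1, e2, e3, e4] at h
    exact h
  -- total values
  have hWsum : ∀ k : Fin 2, ∑ i : Fin (n+nh), w i k = W k := by
    intro k
    rw [hW, hw, Fin.sum_univ_add]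
    simp only [Fin.addCases_left, Fin.addCases_right]
    rw [Finset.sum_const, Finset.card_univ, Fintype.card_fin, nsmul_eq_mul]
    field_simp
  -- key aggregate identity
  have hkey : c * ((∑ j, a j 0) - (∑ j, a j 1)) =
      Real.exp (∑ j, a j 0) * Real.exp (∑ j, a j 1) /
        (Real.exp (∑ j, a j 0) + Real.exp (∑ j, a j 1))^2 * (W 0 - W 1) := by
    calc c * ((∑ j, a j 0) - (∑ j, a j 1))
        = ∑ i, c * (a i 0 - a i 1) := by
          rw [← Finset.mul_sum, Finset.sum_sub_distrib]
      _ = ∑ i, Real.exp (∑ j, a j 0) * Real.exp (∑ j, a j 1) /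
            (Real.exp (∑ j, a j 0) + Real.exp (∑ j, a j 1))^2 * (w i 0 - w i 1) :=
          Finset.sum_congr rfl (fun i _ => hfoc i)
      _ = _ := by
          rw [← Finset.mul_sum, Finset.sum_sub_distrib, hWsum 0, hWsum 1]
  -- unfold softmax in the goal
  simp only [softmax, Fin.sum_univ_two]
  set E0 := Real.exp (∑ j, a j 0) with hE0def
  set E1 := Real.exp (∑ j, a j 1) with hE1def
  have hW1 : 0 ≤ W 1 := by
    rw [hW]
    have h1 := Finset.sum_nonneg (fun i (_ : i ∈ Finset.univ) => hv i 1)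
    have h2 := hB 1
    linarith
  have hE1E0 : E1 ≤ E0 := by
    have hrhs : 0 ≤ E0 * E1 / (E0 + E1)^2 * (W 0 - W 1) := by
      apply mul_nonneg (by positivity)
      linarith
    rw [← hkey] at hrhs
    have hAB : (∑ j, a j 1) ≤ (∑ j, a j 0) := by nlinarith
    rw [hE0def, hE1def]
    exact Real.exp_le_exp.2 hAB
  have hp : 1/2 ≤ E0 / (E0 + E1) := by
    rw [le_div_iff₀ hdenp]
    linarith
  have hpq : E0 / (E0 + E1) + E1 / (E0 + E1) = 1 := by
    field_simp
  have hq0 : 0 < E1 / (E0 + E1) := by positivity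
  -- the exponential bound on q
  have hqe : E1 / (E0 + E1) ≤
      Real.exp (-(E1 / (E0 + E1) * (W 0 - W 1) / x)) := by
    have hstep1 : E1 / (E0 + E1) ≤ Real.exp (-((∑ j, a j 0) - (∑ j, a j 1))) := by
      have h1 : E1 / (E0 + E1) ≤ E1 / E0 := by gcongr; linarith
      have h2 : Real.exp (-((∑ j, a j 0) - (∑ j, a j 1))) = E1 / E0 := by
        rw [neg_sub, Real.exp_sub]
      rw [h2]; exact h1
    have hstep2 : E1 / (E0 + E1) * (W 0 - W 1) / x ≤ (∑ j, a j 0) - (∑ j, a j 1) := by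
      have hx2c : x = 2*c := by rw [hc]; ring
      rw [hx2c, div_le_iff₀ (by positivity : (0:ℝ) < 2*c)]
      have key2 : ((∑ j, a j 0) - (∑ j, a j 1)) * (2*c) =
          2 * (E0 * E1 / (E0 + E1)^2) * (W 0 - W 1) := by
        linarith [hkey]
      rw [key2]
      have hsplit : E0 * E1 / (E0 + E1)^2 = (E0 / (E0 + E1)) * (E1 / (E0 + E1)) := by
        field_simp
      rw [hsplit]
      have hQΔ : 0 ≤ E1 / (E0 + E1) * (W 0 - W 1) :=
        mul_nonneg hq0.le (by linarith)
      nlinarith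
    calc E1 / (E0 + E1) ≤ Real.exp (-((∑ j, a j 0) - (∑ j, a j 1))) := hstep1
      _ ≤ Real.exp (-(E1 / (E0 + E1) * (W 0 - W 1) / x)) := by
          apply Real.exp_le_exp.2
          linarith
  exact final_arith (W 0) (W 1) x T (E0/(E0+E1)) (E1/(E0+E1))
    hxpos hWpos hW1 hWord hT hp hpq hq0 hqe
end

section
/- Gap bound under estimate error: in the Synthetic Players QTM with estimates B̂_1, B̂_2 ≥ 0, let x = max_{i,k} v_k^i and α > 0, and suppose |B̂_k − B_k| ≤ α·x for k = 1, 2 and W_1 − W_2 > 2αx. Then in any pure-strategy Nash equilibrium of the (n + n̂)-player QTM, p_1 ≥ 1 − (8c/(W_1 − W_2 − 2αx))^{2/3}. -/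
open Real Finset

lemma foc {N : ℕ} (c : ℝ) (hc : 0 < c) (w : Fin N → Fin 2 → ℝ)
    (a : Fin N → Fin 2 → ℝ) (ha : IsNashQTM c w a) (i : Fin N) :
    c * (a i 0 - a i 1)
      = softmax (fun k => ∑ j, a j k) 0 * softmax (fun k => ∑ j, a j k) 1
        * (w i 0 - w i 1) := by
  set A0 : ℝ := ∑ j, a j 0 with hA0
  set A1 : ℝ := ∑ j, a j 1 with hA1
  set C : ℝ := (c / ((N : ℝ) - 1)) * ∑ j ∈ Finset.univ.erase i, (a j 0 ^ 2 + a j 1 ^ 2) with hC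
  set g : ℝ → ℝ := fun ε =>
    (Real.exp (A0 + ε) * w i 0 + Real.exp (A1 - ε) * w i 1)
      / (Real.exp (A0 + ε) + Real.exp (A1 - ε))
    - c * ((a i 0 + ε)^2 + (a i 1 - ε)^2) + C with hg
  have hupd : ∀ (b : Fin 2 → ℝ) (k : Fin 2),
      (∑ j, Function.update a i b j k) = (∑ j, a j k) - a i k + b k := by
    intro b k
    have h : (fun j => Function.update a i b j k)
        = Function.update (fun j => a j k) i (b k) := by
      funext j
      by_cases h : j = i <;> simp [Function.update_apply, h]
    rw [show (∑ j, Function.update a i b j k) = ∑ j, Function.update (fun j => a j k) i (b k) j from by rw [← h]]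
    rw [Finset.sum_update_of_mem (Finset.mem_univ i)]
    rw [Finset.sdiff_singleton_eq_erase, ← Finset.add_sum_erase _ _ (Finset.mem_univ i)]
    ring
  have hgeq : ∀ ε : ℝ, g ε = qtmUtil c w (Function.update a i ![a i 0 + ε, a i 1 - ε]) i := by
    intro ε
    have h0 := hupd ![a i 0 + ε, a i 1 - ε] 0
    have h1 := hupd ![a i 0 + ε, a i 1 - ε] 1
    simp only [Matrix.cons_val_zero, Matrix.cons_val_one, Matrix.head_cons] at h0 h1
    have herase : ∑ j ∈ Finset.univ.erase i, ∑ k, (Function.update a i ![a i 0 + ε, a i 1 - ε] j k)^2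
        = ∑ j ∈ Finset.univ.erase i, ∑ k, (a j k)^2 := by
      refine Finset.sum_congr rfl fun j hj => ?_
      rw [Function.update_of_ne (Finset.ne_of_mem_erase hj)]
    rw [qtmUtil, herase]
    simp only [softmax, Fin.sum_univ_two, Function.update_self,
      Matrix.cons_val_zero, Matrix.cons_val_one, Matrix.head_cons, h0, h1]
    rw [hg]
    ring_nf
    rw [hC, hA0, hA1]; ring_nf
  have hmax : IsLocalMax g 0 := by
    apply Filter.Eventually.of_forall
    intro ε
    rw [hgeq ε]
    have h00 : g 0 = qtmUtil c w a i := by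
      rw [hgeq 0]
      congr 1
      have : ![a i 0 + 0, a i 1 - 0] = a i := by
        funext k
        fin_cases k <;> simp
      rw [this, Function.update_eq_self]
    rw [h00]
    exact ha i _
  set E0 : ℝ := Real.exp A0 with hE0
  set E1 : ℝ := Real.exp A1 with hE1
  have hE0pos : 0 < E0 := Real.exp_pos _
  have hE1pos : 0 < E1 := Real.exp_pos _
  have hDpos : 0 < E0 + E1 := by linarith
  have hd0 : HasDerivAt (fun ε : ℝ => A0 + ε) 1 0 := (hasDerivAt_id 0).const_add A0
  have hd1 : HasDerivAt (fun ε : ℝ => A1 - ε) (-1) 0 := by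
    simpa using (hasDerivAt_id (0:ℝ)).const_sub A1
  have he0 : HasDerivAt (fun ε : ℝ => Real.exp (A0 + ε)) E0 0 := by
    simpa using hd0.exp
  have he1 : HasDerivAt (fun ε : ℝ => Real.exp (A1 - ε)) (-E1) 0 := by
    simpa using hd1.exp
  have hN : HasDerivAt (fun ε : ℝ => Real.exp (A0 + ε) * w i 0 + Real.exp (A1 - ε) * w i 1)
      (E0 * w i 0 + (-E1) * w i 1) 0 := (he0.mul_const _).add (he1.mul_const _)
  have hDen : HasDerivAt (fun ε : ℝ => Real.exp (A0 + ε) + Real.exp (A1 - ε)) (E0 + -E1) 0 :=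
    he0.add he1
  have hDen0 : (fun ε : ℝ => Real.exp (A0 + ε) + Real.exp (A1 - ε)) 0 ≠ 0 := by
    simp only [add_zero, sub_zero]
    positivity
  have hQ := hN.div hDen hDen0
  have hc1 : HasDerivAt (fun ε : ℝ => (a i 0 + ε)^2) (2 * a i 0) 0 := by
    simpa using ((hasDerivAt_id (0:ℝ)).const_add (a i 0)).fun_pow 2
  have hc2 : HasDerivAt (fun ε : ℝ => (a i 1 - ε)^2) (-(2 * a i 1)) 0 := by
    simpa using ((hasDerivAt_id (0:ℝ)).const_sub (a i 1)).fun_pow 2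
  have hG : HasDerivAt g
      (((E0 * w i 0 + (-E1) * w i 1) * ((fun ε : ℝ => Real.exp (A0 + ε) + Real.exp (A1 - ε)) 0)
        - ((fun ε : ℝ => Real.exp (A0 + ε) * w i 0 + Real.exp (A1 - ε) * w i 1) 0) * (E0 + -E1))
        / ((fun ε : ℝ => Real.exp (A0 + ε) + Real.exp (A1 - ε)) 0) ^ 2
       - c * (2 * a i 0 + -(2 * a i 1))) 0 := by
    rw [hg]
    exact (hQ.sub ((hc1.add hc2).const_mul c)).add_const C
  have hzero := hmax.hasDerivAt_eq_zero hG
  simp only [add_zero, sub_zero, ← hE0, ← hE1] at hzero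
  have hsm0 : softmax (fun k => ∑ j, a j k) (0 : Fin 2) = E0 / (E0 + E1) := by
    simp [softmax, Fin.sum_univ_two, hE0, hE1, hA0, hA1]
  have hsm1 : softmax (fun k => ∑ j, a j k) (1 : Fin 2) = E1 / (E0 + E1) := by
    simp [softmax, Fin.sum_univ_two, hE0, hE1, hA0, hA1]
  rw [hsm0, hsm1]
  have hne : E0 + E1 ≠ 0 := ne_of_gt hDpos
  field_simp at hzero ⊢
  nlinarith [hzero, sq_nonneg (E0 + E1)]

theorem stmt15 (n nh : ℕ) (hn : 2 ≤ n) (hnh : 1 ≤ nh)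
    (c : ℝ) (hc : 0 < c)
    (v : Fin n → Fin 2 → ℝ) (hv : ∀ i k, 0 ≤ v i k)
    (B : Fin 2 → ℝ) (hB : ∀ k, 0 ≤ B k)
    (Bhat : Fin 2 → ℝ) (hBhat : ∀ k, 0 ≤ Bhat k)
    (x : ℝ) (hx : x = ⨆ i, ⨆ k, v i k)
    (α : ℝ) (hα : 0 < α)
    (hdev : ∀ k, |Bhat k - B k| ≤ α * x)
    (W : Fin 2 → ℝ) (hW : ∀ k, W k = (∑ i, v i k) + B k)
    (hWord : W 1 ≤ W 0)
    (hgap : 2 * α * x < W 0 - W 1)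
    (w : Fin (n + nh) → Fin 2 → ℝ)
    (hw : w = fun i => Fin.addCases v (fun _ k => Bhat k / (nh : ℝ)) i)
    (a : Fin (n + nh) → Fin 2 → ℝ) (ha : IsNashQTM c w a) :
    1 - (8 * c / (W 0 - W 1 - 2 * α * x)) ^ ((2 : ℝ) / 3)
      ≤ softmax (fun k => ∑ j, a j k) 0 := by
  have hnh0 : ((nh : ℝ)) ≠ 0 := by positivity
  obtain ⟨A0, hA0⟩ : ∃ y : ℝ, y = ∑ j, a j 0 := ⟨_, rfl⟩
  obtain ⟨A1, hA1⟩ : ∃ y : ℝ, y = ∑ j, a j 1 := ⟨_, rfl⟩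
  obtain ⟨p, hp⟩ : ∃ y : ℝ, y = softmax (fun k => ∑ j, a j k) 0 := ⟨_, rfl⟩
  obtain ⟨q, hq⟩ : ∃ y : ℝ, y = softmax (fun k => ∑ j, a j k) 1 := ⟨_, rfl⟩
  obtain ⟨E0, hE0⟩ : ∃ y : ℝ, y = Real.exp A0 := ⟨_, rfl⟩
  obtain ⟨E1, hE1⟩ : ∃ y : ℝ, y = Real.exp A1 := ⟨_, rfl⟩
  have hE0pos : 0 < E0 := hE0 ▸ Real.exp_pos _
  have hE1pos : 0 < E1 := hE1 ▸ Real.exp_pos _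
  have hEpos : 0 < E0 + E1 := by linarith
  have hpE : p = E0 / (E0 + E1) := by
    simp [hp, softmax, Fin.sum_univ_two, hE0, hE1, hA0, hA1]
  have hqE : q = E1 / (E0 + E1) := by
    simp [hq, softmax, Fin.sum_univ_two, hE0, hE1, hA0, hA1]
  have hppos : 0 < p := by rw [hpE]; positivity
  have hqpos : 0 < q := by rw [hqE]; positivity
  have hpq1 : p + q = 1 := by rw [hpE, hqE]; field_simp
  -- total values
  have hsw : ∀ k : Fin 2, (∑ i, w i k) = (∑ i, v i k) + Bhat k := by
    intro k
    rw [hw, Fin.sum_univ_add]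
    simp only [Fin.addCases_left, Fin.addCases_right]
    rw [Finset.sum_const, Finset.card_univ, Fintype.card_fin, nsmul_eq_mul]
    field_simp
  obtain ⟨D, hD⟩ : ∃ y : ℝ, y = (∑ i, w i 0) - (∑ i, w i 1) := ⟨_, rfl⟩
  -- summed first-order condition
  have hfocsum : c * (A0 - A1) = p * q * D := by
    calc c * (A0 - A1) = ∑ i, c * (a i 0 - a i 1) := by
          rw [hA0, hA1, ← Finset.sum_sub_distrib, Finset.mul_sum]
      _ = ∑ i, p * q * (w i 0 - w i 1) := by
          refine Finset.sum_congr rfl fun i _ => ?_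
          rw [hp, hq]
          exact foc c hc w a ha i
      _ = p * q * D := by
          rw [hD, ← Finset.mul_sum, Finset.sum_sub_distrib]
  obtain ⟨D', hD'⟩ : ∃ y : ℝ, y = W 0 - W 1 - 2 * α * x := ⟨_, rfl⟩
  have hD'pos : 0 < D' := by rw [hD']; linarith
  have hDD' : D' ≤ D := by
    have h0 := abs_le.mp (hdev 0)
    have h1 := abs_le.mp (hdev 1)
    rw [hD', hD, hsw 0, hsw 1, hW 0, hW 1]
    linarith [h0.1, h0.2, h1.1, h1.2]
  have hDpos : 0 < D := lt_of_lt_of_le hD'pos hDD'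
  -- A0 ≥ A1, hence p ≥ 1/2
  have hs : 0 ≤ A0 - A1 := by
    have h0 : 0 ≤ p * q * D :=
      mul_nonneg (mul_nonneg hppos.le hqpos.le) hDpos.le
    have h1 : c * 0 ≤ c * (A0 - A1) := by
      rw [mul_zero, hfocsum]; exact h0
    exact le_of_mul_le_mul_left h1 hc
  have hE10 : E1 ≤ E0 := by
    rw [hE0, hE1]; exact Real.exp_le_exp.mpr (by linarith)
  have hphalf : 1 / 2 ≤ p := by
    have hqp : q ≤ p := by
      rw [hpE, hqE]
      rw [div_le_div_iff₀ hEpos hEpos]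
      nlinarith [hE10, hEpos]
    linarith
  -- q ≤ exp (A1 - A0)
  have hqexp : q ≤ Real.exp (A1 - A0) := by
    have h1 : q ≤ E1 / E0 := by
      rw [hqE]
      exact div_le_div_of_nonneg_left hE1pos.le hE0pos (by linarith)
    have h2 : E1 / E0 = Real.exp (A1 - A0) := by
      rw [hE0, hE1, Real.exp_sub]
    linarith
  -- t := q D / (2c) ≤ A0 - A1
  obtain ⟨t, ht⟩ : ∃ y : ℝ, y = q * D / (2 * c) := ⟨_, rfl⟩
  have htpos : 0 < t := by
    rw [ht]; exact div_pos (mul_pos hqpos hDpos) (by linarith)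
  have hst : t ≤ A0 - A1 := by
    have hh : 0 ≤ (p - 1/2) * (q * D) :=
      mul_nonneg (by linarith) (mul_nonneg hqpos.le hDpos.le)
    have h1 : q * D / 2 ≤ p * q * D := by nlinarith [hh]
    rw [ht, div_le_iff₀ (by positivity : (0:ℝ) < 2 * c)]
    calc q * D ≤ 2 * (p * q * D) := by linarith
      _ = 2 * (c * (A0 - A1)) := by rw [hfocsum]
      _ = (A0 - A1) * (2 * c) := by ring
  have hqet : q ≤ Real.exp (-t) :=
    hqexp.trans (Real.exp_le_exp.mpr (by linarith))
  -- exp t ≥ t^2/4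
  have hexpt : t ^ 2 / 4 ≤ Real.exp t := by
    have h1 : t / 2 + 1 ≤ Real.exp (t / 2) := Real.add_one_le_exp (t / 2)
    have h2 : Real.exp (t / 2) * Real.exp (t / 2) = Real.exp t := by
      rw [← Real.exp_add]; ring_nf
    have h0 : t / 2 ≤ Real.exp (t / 2) := by linarith
    calc t ^ 2 / 4 = (t / 2) ^ 2 := by ring
      _ ≤ Real.exp (t / 2) ^ 2 := pow_le_pow_left₀ (by linarith) h0 2
      _ = Real.exp t := by rw [sq, h2]
  have hq4 : q * t ^ 2 ≤ 4 := by
    have h3 : Real.exp (-t) = 1 / Real.exp t := by rw [Real.exp_neg]; ring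
    have h4 : Real.exp (-t) ≤ 4 / t ^ 2 := by
      rw [h3, div_le_div_iff₀ (Real.exp_pos t) (pow_pos htpos 2)]
      linarith [hexpt]
    have h5 := hqet.trans h4
    rw [le_div_iff₀ (pow_pos htpos 2)] at h5
    linarith
  have hq3 : q ^ 3 * D ^ 2 ≤ 16 * c ^ 2 := by
    have hqd : q * D = t * (2 * c) := by rw [ht]; field_simp
    have key : q ^ 3 * D ^ 2 = (q * t ^ 2) * (4 * c ^ 2) := by
      calc q ^ 3 * D ^ 2 = q * (q * D) ^ 2 := by ring
        _ = q * (t * (2 * c)) ^ 2 := by rw [hqd]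
        _ = (q * t ^ 2) * (4 * c ^ 2) := by ring
    have h5 := mul_le_mul_of_nonneg_right hq4 (by positivity : (0:ℝ) ≤ 4 * c ^ 2)
    rw [key]; linarith
  obtain ⟨G, hG⟩ : ∃ y : ℝ, y = 8 * c / D' := ⟨_, rfl⟩
  have hGpos : 0 < G := by rw [hG]; exact div_pos (by linarith) hD'pos
  have hq3G : q ^ 3 ≤ G ^ 2 := by
    have h7 : q ^ 3 ≤ 16 * c ^ 2 / D ^ 2 := by
      rw [le_div_iff₀ (pow_pos hDpos 2)]; linarith
    have h8 : 16 * c ^ 2 / D ^ 2 ≤ 16 * c ^ 2 / D' ^ 2 :=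
      div_le_div_of_nonneg_left (by positivity) (pow_pos hD'pos 2) (pow_le_pow_left₀ hD'pos.le hDD' 2)
    have h9 : G ^ 2 = 64 * c ^ 2 / D' ^ 2 := by
      rw [hG]; field_simp; ring
    have h10 : 16 * c ^ 2 / D' ^ 2 ≤ 64 * c ^ 2 / D' ^ 2 := by
      rw [div_le_div_iff₀ (pow_pos hD'pos 2) (pow_pos hD'pos 2)]
      have h11 : (0:ℝ) ≤ c ^ 2 * D' ^ 2 := by positivity
      linarith
    linarith
  have hcube : (G ^ ((2:ℝ)/3)) ^ (3:ℕ) = G ^ (2:ℕ) := by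
    rw [← Real.rpow_natCast (G ^ ((2:ℝ)/3)) 3, ← Real.rpow_mul hGpos.le]
    norm_num
  have hqG : q ≤ G ^ ((2:ℝ)/3) := by
    apply le_of_pow_le_pow_left₀ (by norm_num : (3:ℕ) ≠ 0) (Real.rpow_nonneg hGpos.le _)
    rw [hcube]
    simpa using hq3G
  have hfin : 1 - G ^ ((2:ℝ)/3) ≤ p := by linarith
  rw [hG, hD', hp] at hfin
  exact hfin
end

section
/- Welfare with predictions (main combined bound): in the Synthetic Players QTM with estimates B̂_1, B̂_2 ≥ 0, let x = max_{i,k} v_k^i > 0, set c = x/2, suppose n̂ ≥ (max_k B̂_k)/(2c) so each synthetic agent's values are at most 2c, suppose |B̂_k − B_k| ≤ α·x for k = 1, 2 for some α > 0, and let T = W_1/x with W_1 > 0. Then in any pure-strategy Nash equilibrium of the (n + n̂)-player QTM, the expected true welfare satisfies p_1 W_1 + p_2 W_2 ≥ W_1 · (1 − 2α/T − (4/T)^{2/5}). -/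
open Real Finset

private lemma sum_update_apply {N : ℕ} (a : Fin N → Fin 2 → ℝ) (i : Fin N) (b : Fin 2 → ℝ)
    (l : Fin 2) :
    ∑ j, Function.update a i b j l = (∑ j, a j l) - a i l + b l := by
  have h : ∀ j, Function.update a i b j l = Function.update (fun j => a j l) i (b l) j := by
    intro j
    rcases eq_or_ne j i with h | h
    · subst h; simp
    · simp [Function.update_of_ne h]
  rw [Finset.sum_congr rfl (fun j _ => h j), Finset.sum_update_of_mem (Finset.mem_univ i),
    Finset.sdiff_singleton_eq_erase, Finset.sum_erase_eq_sub (Finset.mem_univ i)]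
  ring

private lemma qtm_val {N : ℕ} (c : ℝ) (w : Fin N → Fin 2 → ℝ) (a' : Fin N → Fin 2 → ℝ)
    (i : Fin N) :
    qtmUtil c w a' i
      = (w i 0 * Real.exp (∑ j, a' j 0) + w i 1 * Real.exp (∑ j, a' j 1))
          / (Real.exp (∑ j, a' j 0) + Real.exp (∑ j, a' j 1))
        - c * ((a' i 0) ^ 2 + (a' i 1) ^ 2)
        + (c / ((N : ℝ) - 1)) * ∑ j ∈ Finset.univ.erase i, ∑ k, (a' j k) ^ 2 := by
  have hpos : (0:ℝ) < Real.exp (∑ j, a' j 0) + Real.exp (∑ j, a' j 1) := by positivity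
  unfold qtmUtil softmax
  simp only [Fin.sum_univ_two]
  field_simp

private lemma expand0 {N : ℕ} (c : ℝ) (w a : Fin N → Fin 2 → ℝ) (i : Fin N) (t : ℝ) :
    qtmUtil c w (Function.update a i (Function.update (a i) 0 t)) i
      = (w i 0 * Real.exp ((∑ j, a j 0) - a i 0 + t) + w i 1 * Real.exp (∑ j, a j 1))
          / (Real.exp ((∑ j, a j 0) - a i 0 + t) + Real.exp (∑ j, a j 1))
        - c * t ^ 2
        + (-(c * a i 1 ^ 2) + (c / ((N : ℝ) - 1)) * ∑ j ∈ Finset.univ.erase i, ∑ k, (a j k) ^ 2) := by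
  rw [qtm_val]
  have h0 : ∑ j, Function.update a i (Function.update (a i) 0 t) j 0
      = (∑ j, a j 0) - a i 0 + t := by
    rw [sum_update_apply]; simp
  have h1 : ∑ j, Function.update a i (Function.update (a i) 0 t) j 1
      = ∑ j, a j 1 := by
    rw [sum_update_apply]
    simp
  have hred : ∑ j ∈ Finset.univ.erase i, ∑ k, (Function.update a i (Function.update (a i) 0 t) j k) ^ 2
      = ∑ j ∈ Finset.univ.erase i, ∑ k, (a j k) ^ 2 :=
    Finset.sum_congr rfl (fun j hj => by rw [Function.update_of_ne (Finset.ne_of_mem_erase hj)])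
  rw [h0, h1, hred]
  simp [Function.update_self]
  ring

private lemma expand1 {N : ℕ} (c : ℝ) (w a : Fin N → Fin 2 → ℝ) (i : Fin N) (t : ℝ) :
    qtmUtil c w (Function.update a i (Function.update (a i) 1 t)) i
      = (w i 1 * Real.exp ((∑ j, a j 1) - a i 1 + t) + w i 0 * Real.exp (∑ j, a j 0))
          / (Real.exp ((∑ j, a j 1) - a i 1 + t) + Real.exp (∑ j, a j 0))
        - c * t ^ 2
        + (-(c * a i 0 ^ 2) + (c / ((N : ℝ) - 1)) * ∑ j ∈ Finset.univ.erase i, ∑ k, (a j k) ^ 2) := by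
  rw [qtm_val]
  have h0 : ∑ j, Function.update a i (Function.update (a i) 1 t) j 0
      = ∑ j, a j 0 := by
    rw [sum_update_apply]
    simp
  have h1 : ∑ j, Function.update a i (Function.update (a i) 1 t) j 1
      = (∑ j, a j 1) - a i 1 + t := by
    rw [sum_update_apply]; simp
  have hred : ∑ j ∈ Finset.univ.erase i, ∑ k, (Function.update a i (Function.update (a i) 1 t) j k) ^ 2
      = ∑ j ∈ Finset.univ.erase i, ∑ k, (a j k) ^ 2 :=
    Finset.sum_congr rfl (fun j hj => by rw [Function.update_of_ne (Finset.ne_of_mem_erase hj)])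
  rw [h0, h1, hred]
  have hpos : (0:ℝ) < Real.exp ((∑ j, a j 1) - a i 1 + t) + Real.exp (∑ j, a j 0) := by positivity
  simp [Function.update_self]
  rw [← sub_eq_zero]
  field_simp
  ring

private lemma foc_aux_s16 (c P Q s e R t0 : ℝ) (he : 0 < e)
    (hmax : ∀ t : ℝ, (P * Real.exp (s + t) + Q * e) / (Real.exp (s + t) + e) - c * t ^ 2 + R
      ≤ (P * Real.exp (s + t0) + Q * e) / (Real.exp (s + t0) + e) - c * t0 ^ 2 + R) :
    2 * c * t0 = Real.exp (s + t0) * e * (P - Q) / (Real.exp (s + t0) + e) ^ 2 := by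
  have h1 : HasDerivAt (fun t : ℝ => s + t) 1 t0 := by
    simpa using (hasDerivAt_id t0).const_add s
  have h2 : HasDerivAt (fun t : ℝ => Real.exp (s + t)) (Real.exp (s + t0)) t0 := by
    simpa using h1.exp
  have hnum : HasDerivAt (fun t : ℝ => P * Real.exp (s + t) + Q * e) (P * Real.exp (s + t0)) t0 :=
    (h2.const_mul P).add_const _
  have hden : HasDerivAt (fun t : ℝ => Real.exp (s + t) + e) (Real.exp (s + t0)) t0 :=
    h2.add_const e
  have hdenne : Real.exp (s + t0) + e ≠ 0 := by positivity
  have hdiv := hnum.div hden hdenne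
  have hsq : HasDerivAt (fun t : ℝ => c * t ^ 2) (2 * c * t0) t0 := by
    have := (hasDerivAt_pow 2 t0).const_mul c
    norm_num at this
    rw [show 2 * c * t0 = c * (2 * t0) by ring]
    exact this
  have hd := (hdiv.sub hsq).add_const R
  have heq : (P * Real.exp (s + t0) * (Real.exp (s + t0) + e)
        - (P * Real.exp (s + t0) + Q * e) * Real.exp (s + t0)) / (Real.exp (s + t0) + e) ^ 2
        - 2 * c * t0
      = Real.exp (s + t0) * e * (P - Q) / (Real.exp (s + t0) + e) ^ 2 - 2 * c * t0 := by
    ring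
  rw [heq] at hd
  have hloc : IsLocalMax (fun t : ℝ =>
      (P * Real.exp (s + t) + Q * e) / (Real.exp (s + t) + e) - c * t ^ 2 + R) t0 :=
    Filter.Eventually.of_forall hmax
  have h0 : deriv (fun t : ℝ =>
      (P * Real.exp (s + t) + Q * e) / (Real.exp (s + t) + e) - c * t ^ 2 + R) t0 = 0 :=
    hloc.deriv_eq_zero
  have h0 := hd.deriv.symm.trans h0
  linarith

private lemma nash_foc {N : ℕ} (c : ℝ) (w a : Fin N → Fin 2 → ℝ)
    (ha : IsNashQTM c w a) (i : Fin N) :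
    2 * c * (a i 0 - a i 1)
      = 2 * (Real.exp (∑ j, a j 0) * Real.exp (∑ j, a j 1)
          / (Real.exp (∑ j, a j 0) + Real.exp (∑ j, a j 1)) ^ 2) * (w i 0 - w i 1) := by
  have hE0 : (0:ℝ) < Real.exp (∑ j, a j 0) := Real.exp_pos _
  have hE1 : (0:ℝ) < Real.exp (∑ j, a j 1) := Real.exp_pos _
  have hupd : Function.update a i (Function.update (a i) 0 (a i 0)) = a := by
    rw [Function.update_eq_self, Function.update_eq_self]
  have hupd1 : Function.update a i (Function.update (a i) 1 (a i 1)) = a := by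
    rw [Function.update_eq_self, Function.update_eq_self]
  have h0 : 2 * c * (a i 0)
      = Real.exp ((∑ j, a j 0) - a i 0 + a i 0) * Real.exp (∑ j, a j 1) * (w i 0 - w i 1)
        / (Real.exp ((∑ j, a j 0) - a i 0 + a i 0) + Real.exp (∑ j, a j 1)) ^ 2 := by
    apply foc_aux_s16 c (w i 0) (w i 1) ((∑ j, a j 0) - a i 0) (Real.exp (∑ j, a j 1))
      (-(c * a i 1 ^ 2) + (c / ((N : ℝ) - 1)) * ∑ j ∈ Finset.univ.erase i, ∑ k, (a j k) ^ 2)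
      (a i 0) hE1
    intro t
    rw [← expand0 c w a i t, ← expand0 c w a i (a i 0), hupd]
    exact ha i _
  have h1 : 2 * c * (a i 1)
      = Real.exp ((∑ j, a j 1) - a i 1 + a i 1) * Real.exp (∑ j, a j 0) * (w i 1 - w i 0)
        / (Real.exp ((∑ j, a j 1) - a i 1 + a i 1) + Real.exp (∑ j, a j 0)) ^ 2 := by
    apply foc_aux_s16 c (w i 1) (w i 0) ((∑ j, a j 1) - a i 1) (Real.exp (∑ j, a j 0))
      (-(c * a i 0 ^ 2) + (c / ((N : ℝ) - 1)) * ∑ j ∈ Finset.univ.erase i, ∑ k, (a j k) ^ 2)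
      (a i 1) hE0
    intro t
    rw [← expand1 c w a i t, ← expand1 c w a i (a i 1), hupd1]
    exact ha i _
  rw [show (∑ j, a j 0) - a i 0 + a i 0 = ∑ j, a j 0 from by ring] at h0
  rw [show (∑ j, a j 1) - a i 1 + a i 1 = ∑ j, a j 1 from by ring] at h1
  have hne : (Real.exp (∑ j, a j 0) + Real.exp (∑ j, a j 1)) ^ 2 ≠ 0 := by positivity
  field_simp at h0 h1 ⊢
  linarith

private lemma sqrt_le_pow_bound (T : ℝ) (hT4 : 4 < T) :
    2 * Real.sqrt T ≤ (4:ℝ) ^ ((2:ℝ)/5) * T ^ ((3:ℝ)/5) := by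
  have hTpos : (0:ℝ) < T := by linarith
  have h1 : T ^ ((3:ℝ)/5) = T ^ ((1:ℝ)/10) * T ^ ((1:ℝ)/2) := by
    rw [← Real.rpow_add hTpos]; norm_num
  have h2 : (4:ℝ) ^ ((1:ℝ)/10) ≤ T ^ ((1:ℝ)/10) :=
    Real.rpow_le_rpow (by norm_num) hT4.le (by norm_num)
  have h3 : (4:ℝ) ^ ((2:ℝ)/5) * (4:ℝ) ^ ((1:ℝ)/10) = 2 := by
    rw [← Real.rpow_add (by norm_num : (0:ℝ) < 4)]
    norm_num
  have h4 : Real.sqrt T = T ^ ((1:ℝ)/2) := Real.sqrt_eq_rpow T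
  have h5 : (0:ℝ) < T ^ ((1:ℝ)/2) := Real.rpow_pos_of_pos hTpos _
  have h6 : (0:ℝ) < (4:ℝ) ^ ((2:ℝ)/5) := Real.rpow_pos_of_pos (by norm_num) _
  calc 2 * Real.sqrt T = ((4:ℝ) ^ ((2:ℝ)/5) * (4:ℝ) ^ ((1:ℝ)/10)) * T ^ ((1:ℝ)/2) := by
        rw [h3, h4]
    _ ≤ ((4:ℝ) ^ ((2:ℝ)/5) * T ^ ((1:ℝ)/10)) * T ^ ((1:ℝ)/2) := by
        have := mul_le_mul_of_nonneg_left h2 h6.le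
        nlinarith
    _ = (4:ℝ) ^ ((2:ℝ)/5) * T ^ ((3:ℝ)/5) := by rw [h1]; ring

set_option maxHeartbeats 2000000 in
private lemma core (x α T W0 W1 d P0 P1 D : ℝ)
    (hx : 0 < x) (hα : 0 < α)
    (hW1 : 0 ≤ W1) (hWord : W1 ≤ W0) (hW0 : 0 < W0)
    (hT : T = W0 / x)
    (hd1 : W0 - W1 - d ≤ 2 * (α * x)) (hd2 : d - (W0 - W1) ≤ 2 * (α * x))
    (hP0pos : 0 < P0) (hP1pos : 0 < P1) (hP01 : P0 + P1 = 1)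
    (hfoc : x * D = 2 * P0 * P1 * d)
    (hhalf : 0 ≤ D → 1 / 2 ≤ P0)
    (hP1exp : P1 ≤ Real.exp (-D)) :
    W0 * (1 - 2 * α / T - (4 / T) ^ ((2:ℝ)/5)) ≤ P0 * W0 + P1 * W1 := by
  have hTpos : 0 < T := by rw [hT]; positivity
  have hrpos : (0:ℝ) < (4 / T) ^ ((2:ℝ)/5) := Real.rpow_pos_of_pos (by positivity) _
  have hP1le : P1 ≤ 1 := by linarith
  by_cases hg : 1 - 2 * α / T - (4 / T) ^ ((2:ℝ)/5) ≤ 0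
  · have h1 : W0 * (1 - 2 * α / T - (4 / T) ^ ((2:ℝ)/5)) ≤ 0 :=
      mul_nonpos_of_nonneg_of_nonpos hW0.le hg
    nlinarith [mul_pos hP0pos hW0, mul_nonneg hP1pos.le hW1]
  push_neg at hg
  have huT : 0 < 2 * α / T := by positivity
  have hT4 : 4 < T := by
    by_contra h4
    push_neg at h4
    have h14 : (1:ℝ) ≤ 4 / T := (one_le_div hTpos).mpr h4
    have : (1:ℝ) ≤ (4 / T) ^ ((2:ℝ)/5) := by
      calc (1:ℝ) = 1 ^ ((2:ℝ)/5) := (Real.one_rpow _).symm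
        _ ≤ (4 / T) ^ ((2:ℝ)/5) := Real.rpow_le_rpow zero_le_one h14 (by norm_num)
    linarith
  have hαT : 2 * α < T := by
    have h1 : 2 * α / T < 1 := by linarith
    have := (div_lt_one hTpos).mp h1
    linarith
  have hWxT : W0 = x * T := by rw [hT]; field_simp
  have hErw1 : W0 * (2 * α / T) = 2 * (α * x) := by
    rw [hWxT]; field_simp
  have hT25 : (0:ℝ) < T ^ ((2:ℝ)/5) := Real.rpow_pos_of_pos hTpos _
  have hmul : T ^ ((3:ℝ)/5) * T ^ ((2:ℝ)/5) = T := by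
    rw [← Real.rpow_add hTpos]; norm_num
  have hdiv' : T / T ^ ((2:ℝ)/5) = T ^ ((3:ℝ)/5) := by
    rw [div_eq_iff hT25.ne']; linarith [hmul]
  have hErw2 : W0 * ((4 / T) ^ ((2:ℝ)/5)) = x * ((4:ℝ) ^ ((2:ℝ)/5) * T ^ ((3:ℝ)/5)) := by
    rw [hWxT, Real.div_rpow (by norm_num) hTpos.le,
      show x * T * ((4:ℝ) ^ ((2:ℝ)/5) / T ^ ((2:ℝ)/5))
        = x * ((4:ℝ) ^ ((2:ℝ)/5) * (T / T ^ ((2:ℝ)/5))) from by ring, hdiv']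
  suffices h : P1 * (W0 - W1) ≤ W0 * (2 * α / T) + W0 * ((4 / T) ^ ((2:ℝ)/5)) by
    have hrw : P0 * W0 + P1 * W1 = W0 - P1 * (W0 - W1) := by
      have hP0eq : P0 = 1 - P1 := by linarith
      rw [hP0eq]; ring
    have hexp : W0 * (1 - 2 * α / T - (4 / T) ^ ((2:ℝ)/5))
        = W0 - W0 * (2 * α / T) - W0 * ((4 / T) ^ ((2:ℝ)/5)) := by ring
    rw [hrw, hexp]
    linarith
  by_cases hd : d ≤ 0
  · have hΔ : W0 - W1 ≤ 2 * (α * x) := by linarith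
    have h1 : P1 * (W0 - W1) ≤ W0 - W1 :=
      mul_le_of_le_one_left (by linarith) hP1le
    have h2 : 0 < W0 * ((4 / T) ^ ((2:ℝ)/5)) := mul_pos hW0 hrpos
    linarith [hErw1]
  push_neg at hd
  have hD : 0 < D := by nlinarith [mul_pos (mul_pos (mul_pos (by norm_num : (0:ℝ)<2) hP0pos) hP1pos) hd]
  have hhalf' : 1 / 2 ≤ P0 := hhalf hD.le
  have hYD : P1 * d ≤ x * D := by
    nlinarith [mul_nonneg (by linarith : (0:ℝ) ≤ 2 * P0 - 1) (mul_pos hP1pos hd).le]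
  obtain ⟨σ, hσ⟩ : ∃ σ : ℝ, σ = Real.sqrt (d / x) := ⟨_, rfl⟩
  have hs'pos : 0 < d / x := div_pos hd hx
  have hσpos : 0 < σ := by rw [hσ]; exact Real.sqrt_pos.mpr hs'pos
  have hσsq : x * σ ^ 2 = d := by
    rw [hσ, Real.sq_sqrt hs'pos.le]; field_simp
  have hkey : P1 * d ≤ x * σ := by
    by_contra hcon
    push_neg at hcon
    have hDσ : σ < D := by
      have h1 : x * σ < x * D := lt_of_lt_of_le hcon hYD
      exact lt_of_mul_lt_mul_left h1 hx.le
    have h1 : P1 ≤ Real.exp (-σ) :=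
      le_trans hP1exp (Real.exp_le_exp.mpr (by linarith))
    have h2 : Real.exp (-σ) ≤ 1 / (1 + σ) := by
      have he := Real.add_one_le_exp σ
      have hpos1 : (0:ℝ) < 1 + σ := by linarith
      rw [Real.exp_neg, le_div_iff₀ hpos1]
      have hmm : (Real.exp σ)⁻¹ * (1 + σ) ≤ (Real.exp σ)⁻¹ * Real.exp σ :=
        mul_le_mul_of_nonneg_left (by linarith : 1 + σ ≤ Real.exp σ) (by positivity)
      rw [inv_mul_cancel₀ (Real.exp_pos σ).ne'] at hmm
      linarith
    have h3 : P1 * d ≤ 1 / (1 + σ) * d :=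
      mul_le_mul_of_nonneg_right (le_trans h1 h2) hd.le
    have h4 : 1 / (1 + σ) * d ≤ x * σ := by
      rw [one_div_mul_eq_div, div_le_iff₀ (by linarith : (0:ℝ) < 1 + σ)]
      have hexp2 : x * σ * (1 + σ) = x * σ + x * σ ^ 2 := by ring
      linarith [mul_pos hx hσpos]
    linarith
  have hσle : σ ≤ 2 * Real.sqrt T := by
    have h1 : d / x ≤ 4 * T := by
      rw [div_le_iff₀ hx]
      nlinarith [mul_lt_mul_of_pos_right hαT hx, mul_pos hTpos hx]
    calc σ ≤ Real.sqrt (4 * T) := by rw [hσ]; exact Real.sqrt_le_sqrt h1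
      _ = 2 * Real.sqrt T := by
          rw [show (4:ℝ) * T = 2 ^ 2 * T by norm_num, Real.sqrt_mul (by positivity),
            Real.sqrt_sq (by norm_num)]
  have hfinal : P1 * d ≤ W0 * ((4 / T) ^ ((2:ℝ)/5)) := by
    calc P1 * d ≤ x * σ := hkey
      _ ≤ x * (2 * Real.sqrt T) := mul_le_mul_of_nonneg_left hσle hx.le
      _ ≤ x * ((4:ℝ) ^ ((2:ℝ)/5) * T ^ ((3:ℝ)/5)) :=
          mul_le_mul_of_nonneg_left (sqrt_le_pow_bound T hT4) hx.le
      _ = W0 * ((4 / T) ^ ((2:ℝ)/5)) := hErw2.symm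
  have s1 : P1 * (W0 - W1) ≤ P1 * d + P1 * (2 * (α * x)) := by
    nlinarith [mul_le_mul_of_nonneg_left (show W0 - W1 ≤ d + 2 * (α * x) by linarith) hP1pos.le]
  have s2 : P1 * (2 * (α * x)) ≤ 2 * (α * x) :=
    mul_le_of_le_one_left (by positivity) hP1le
  linarith [hErw1]

private lemma endgame (x α T W0 W1 d s0 s1 : ℝ)
    (hx : 0 < x) (hα : 0 < α)
    (hW1 : 0 ≤ W1) (hWord : W1 ≤ W0) (hW0 : 0 < W0)
    (hT : T = W0 / x)
    (hd1 : W0 - W1 - d ≤ 2 * (α * x)) (hd2 : d - (W0 - W1) ≤ 2 * (α * x))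
    (hfoc : (x / 2) * (s0 - s1)
      = (Real.exp s0 * Real.exp s1 / (Real.exp s0 + Real.exp s1) ^ 2) * d) :
    W0 * (1 - 2 * α / T - (4 / T) ^ ((2:ℝ)/5))
      ≤ Real.exp s0 / (Real.exp s0 + Real.exp s1) * W0
        + Real.exp s1 / (Real.exp s0 + Real.exp s1) * W1 := by
  have hA : (0:ℝ) < Real.exp s0 := Real.exp_pos _
  have hB : (0:ℝ) < Real.exp s1 := Real.exp_pos _
  have hAB : (0:ℝ) < Real.exp s0 + Real.exp s1 := by positivity
  apply core x α T W0 W1 d _ _ (s0 - s1) hx hα hW1 hWord hW0 hT hd1 hd2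
  · positivity
  · positivity
  · field_simp
  · rw [mul_assoc 2, div_mul_div_comm, ← sq]
    linarith [hfoc]
  · intro hD
    have hAgeB : Real.exp s1 ≤ Real.exp s0 := Real.exp_le_exp.mpr (by linarith)
    rw [le_div_iff₀ hAB]
    linarith
  · have h1 : Real.exp (-(s0 - s1)) = Real.exp s1 / Real.exp s0 := by
      rw [show -(s0 - s1) = s1 - s0 by ring, Real.exp_sub]
    rw [h1, div_le_div_iff₀ hAB hA]
    nlinarith

theorem stmt16 (n nh : ℕ) (hn : 2 ≤ n) (hnh : 1 ≤ nh)
    (v : Fin n → Fin 2 → ℝ) (hv : ∀ i k, 0 ≤ v i k)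
    (B : Fin 2 → ℝ) (hB : ∀ k, 0 ≤ B k)
    (Bhat : Fin 2 → ℝ) (hBhat : ∀ k, 0 ≤ Bhat k)
    (x : ℝ) (hx : x = ⨆ i, ⨆ k, v i k) (hxpos : 0 < x)
    (c : ℝ) (hc : c = x / 2)
    (hnhB : (⨆ k, Bhat k) / (2 * c) ≤ (nh : ℝ))
    (α : ℝ) (hα : 0 < α)
    (hdev : ∀ k, |Bhat k - B k| ≤ α * x)
    (W : Fin 2 → ℝ) (hW : ∀ k, W k = (∑ i, v i k) + B k)
    (hWord : W 1 ≤ W 0) (hWpos : 0 < W 0)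
    (T : ℝ) (hT : T = W 0 / x)
    (w : Fin (n + nh) → Fin 2 → ℝ)
    (hw : w = fun i => Fin.addCases v (fun _ k => Bhat k / (nh : ℝ)) i)
    (a : Fin (n + nh) → Fin 2 → ℝ) (ha : IsNashQTM c w a) :
    W 0 * (1 - 2 * α / T - (4 / T) ^ ((2 : ℝ) / 5))
      ≤ softmax (fun k => ∑ j, a j k) 0 * W 0
        + softmax (fun k => ∑ j, a j k) 1 * W 1 := by
  have hnhpos : (0:ℝ) < (nh : ℝ) := by exact_mod_cast Nat.lt_of_lt_of_le Nat.zero_lt_one hnh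
  have hsum : c * ((∑ j, a j 0) - (∑ j, a j 1))
      = (Real.exp (∑ j, a j 0) * Real.exp (∑ j, a j 1)
          / (Real.exp (∑ j, a j 0) + Real.exp (∑ j, a j 1)) ^ 2)
        * (∑ i, (w i 0 - w i 1)) := by
    rw [← Finset.sum_sub_distrib, Finset.mul_sum, Finset.mul_sum]
    refine Finset.sum_congr rfl fun i _ => ?_
    have := nash_foc c w a ha i
    linarith
  have hDel : ∑ i : Fin (n + nh), (w i 0 - w i 1)
      = ((∑ i, v i 0) + Bhat 0) - ((∑ i, v i 1) + Bhat 1) := by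
    subst hw
    rw [Fin.sum_univ_add]
    simp only [Fin.addCases_left, Fin.addCases_right]
    rw [Finset.sum_sub_distrib, Finset.sum_sub_distrib, Finset.sum_const, Finset.sum_const,
      Finset.card_univ, Fintype.card_fin, nsmul_eq_mul, nsmul_eq_mul]
    field_simp
    ring
  have hW1nn : 0 ≤ W 1 := by
    rw [hW 1]
    have h1 := hB 1
    have h2 : 0 ≤ ∑ i, v i 1 := Finset.sum_nonneg fun i _ => hv i 1
    linarith
  have hd1' : W 0 - W 1 - (((∑ i, v i 0) + Bhat 0) - ((∑ i, v i 1) + Bhat 1)) ≤ 2 * (α * x) := by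
    rw [hW 0, hW 1]
    have h0 := abs_le.mp (hdev 0)
    have h1 := abs_le.mp (hdev 1)
    have := h0.1; have := h0.2; have := h1.1; have := h1.2
    linarith
  have hd2' : (((∑ i, v i 0) + Bhat 0) - ((∑ i, v i 1) + Bhat 1)) - (W 0 - W 1) ≤ 2 * (α * x) := by
    rw [hW 0, hW 1]
    have h0 := abs_le.mp (hdev 0)
    have h1 := abs_le.mp (hdev 1)
    have := h0.1; have := h0.2; have := h1.1; have := h1.2
    linarith
  simp only [softmax, Fin.sum_univ_two]
  apply endgame x α T (W 0) (W 1) (((∑ i, v i 0) + Bhat 0) - ((∑ i, v i 1) + Bhat 1))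
    (∑ j, a j 0) (∑ j, a j 1) hxpos hα hW1nn hWord hWpos hT hd1' hd2'
  rw [← hDel, ← hc]
  linarith [hsum]
end

section
/- Deviation bound for the quadratic decision wagering mechanism: let x > 0 and ε > 0 and set the liquidity parameter β = ε·x. If every agent i is x-best-responding, i.e., S(b^i, b^i) − S(b̂^i, b^i) ≤ x, then the aggregated output satisfies |B̂_k − B_k| ≤ ε^{1/2}·x for every alternative k. -/
open Real Finset

/-- Expected quadratic score (with liquidity parameter `β`) of a report `r`
against a belief `b`. -/
noncomputable def wagerScore {m : ℕ} (β : ℝ) (r b : Fin m → ℝ) : ℝ :=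
  -(1 / β) * ∑ k, (r k - b k) ^ 2

/-! An `x`-best response misreports each coordinate by at most `√(β x)`, and averaging over
the agents cannot increase the worst deviation; with `β = ε x` this is `√ε · x`. -/

theorem wagerScore_self_sub {m : ℕ} (β : ℝ) (r b : Fin m → ℝ) :
    wagerScore β b b - wagerScore β r b = (1 / β) * ∑ k, (r k - b k) ^ 2 := by
  simp [wagerScore]

theorem sq_sub_le_of_wagerScore_self_sub_le {m : ℕ} {β x : ℝ} (hβ : 0 < β) {r b : Fin m → ℝ}
    (h : wagerScore β b b - wagerScore β r b ≤ x) (k : Fin m) :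
    (r k - b k) ^ 2 ≤ β * x := by
  rw [wagerScore_self_sub, one_div, inv_mul_le_iff₀ hβ] at h
  exact (single_le_sum (fun j _ => sq_nonneg (r j - b j)) (mem_univ k)).trans h

theorem abs_inv_card_mul_sum_le {ι : Type*} (s : Finset ι) (a : ι → ℝ) {c : ℝ} (hc : 0 ≤ c)
    (h : ∀ i ∈ s, |a i| ≤ c) :
    |(1 / (#s : ℝ)) * ∑ i ∈ s, a i| ≤ c := by
  calc |(1 / (#s : ℝ)) * ∑ i ∈ s, a i| = (#s : ℝ)⁻¹ * |∑ i ∈ s, a i| := by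
        rw [abs_mul, one_div, abs_of_nonneg (by positivity)]
    _ ≤ (#s : ℝ)⁻¹ * (#s * c) := by
        gcongr
        exact (abs_sum_le_sum_abs a s).trans (by simpa using sum_le_card_nsmul s _ c h)
    _ = ((#s : ℝ)⁻¹ * #s) * c := by ring
    _ ≤ c := mul_le_of_le_one_left hc inv_mul_le_one

theorem stmt17_general (N m : ℕ)
    (x ε : ℝ) (hx : 0 < x) (hε : 0 < ε)
    (β : ℝ) (hβ : β = ε * x)
    (b bhat : Fin N → Fin m → ℝ)
    (hbr : ∀ i, wagerScore β (b i) (b i) - wagerScore β (bhat i) (b i) ≤ x) :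
    ∀ k, |(1 / (N : ℝ)) * ∑ i, bhat i k - (1 / (N : ℝ)) * ∑ i, b i k|
      ≤ Real.sqrt ε * x := by
  intro k
  have hβpos : 0 < β := hβ ▸ mul_pos hε hx
  have hdev : ∀ i ∈ univ, |bhat i k - b i k| ≤ √ε * x := by
    intro i _
    have h := Real.abs_le_sqrt (sq_sub_le_of_wagerScore_self_sub_le hβpos (hbr i) k)
    rwa [hβ, mul_assoc, sqrt_mul hε.le, sqrt_mul_self hx.le] at h
  have := abs_inv_card_mul_sum_le univ _ (by positivity) hdev
  rwa [card_univ, Fintype.card_fin, sum_sub_distrib, mul_sub] at this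

theorem stmt17 (N m : ℕ) (hN : 1 ≤ N) (hm : 1 ≤ m)
    (x ε : ℝ) (hx : 0 < x) (hε : 0 < ε)
    (β : ℝ) (hβ : β = ε * x)
    (b bhat : Fin N → Fin m → ℝ)
    (hbr : ∀ i, wagerScore β (b i) (b i) - wagerScore β (bhat i) (b i) ≤ x) :
    ∀ k, |(1 / (N : ℝ)) * ∑ i, bhat i k - (1 / (N : ℝ)) * ∑ i, b i k|
      ≤ Real.sqrt ε * x :=
  stmt17_general N m x ε hx hε β hβ b bhat hbr
end
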